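/- Let 0 < a ≤ 1 and let ρ be a nonnegative integrable function on [0,1]² with ∫₀¹ ρ(x,t) dt = 1 for a.e. x, satisfying for a.e. (x,y): ρ(x,y) = g₀ᵃ'(x) f₀ᵃ'(y) ρ(g₀ᵃ(x), f₀ᵃ(y)) when 0 ≤ y < 1/2 and ρ(x,y) = g₁ᵃ'(x) f₁ᵃ'(y) ρ(g₁ᵃ(x), f₁ᵃ(y)) when 1/2 ≤ y < 1. Then the partial cumulative function r(x,y) := ∫₀^y ρ(x,t) dt satisfies, for a.e. x and every y: r(x,y) = ((1+a)/2 − ax)·r(g₀ᵃ(x), f₀ᵃ(y)) for y ∈ [0,1/2], and r(x,y) = (1+a)/2 − ax + ((1−a)/2 + ax)·r(g₁ᵃ(x), f₁ᵃ(y)) for y ∈ [1/2,1]. -/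

import Mathlib

/-!
Fix `x`. On each branch the invariance relation says that `t ↦ ρ(x, t)` equals `g_iᵃ'(x)`
times `f_iᵃ'(t) ρ(g_iᵃ(x), f_iᵃ(t))`; since `f_iᵃ` is monotone, the substitution `s = f_iᵃ(t)`
turns its integral over `[0, y]`, resp. `[1/2, y]`, into `g_iᵃ'(x) r(g_iᵃ(x), f_iᵃ(y))`.
For `y ≥ 1/2` the missing piece is `r(x, 1/2) = g₀ᵃ'(x) r(g₀ᵃ(x), 1)`, and `r(g₀ᵃ(x), 1) = 1`
for a.e. `x` because `g₀ᵃ` has the differentiable left inverse `f₀ᵃ`, hence pulls null sets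
back to null sets.
-/

open Set MeasureTheory

/-- Left branch of the anti-symmetric cusp map:
`f₀ᵃ(x) = ((a+1)/(2a))·(1 - √(1 - 8ax/(a+1)²))` on `[0,1/2]`. -/
noncomputable def f0a (a x : ℝ) : ℝ :=
  ((a + 1) / (2 * a)) * (1 - Real.sqrt (1 - 8 * a * x / (a + 1) ^ 2))

/-- Right branch of the anti-symmetric cusp map: `f₁ᵃ(x) = 1 - f₀ᵃ(1-x)` on `[1/2,1]`. -/
noncomputable def f1a (a x : ℝ) : ℝ := 1 - f0a a (1 - x)

/-- Inverse of the left branch: `g₀ᵃ(x) = ((1+a)/2)x - (a/2)x²`. -/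
noncomputable def g0a (a x : ℝ) : ℝ := ((1 + a) / 2) * x - (a / 2) * x ^ 2

/-- Inverse of the right branch: `g₁ᵃ(x) = 1/2 + ((1-a)/2)x + (a/2)x²`. -/
noncomputable def g1a (a x : ℝ) : ℝ := 1 / 2 + ((1 - a) / 2) * x + (a / 2) * x ^ 2

open Filter intervalIntegral

theorem ae_restrict_comp_of_leftInvOn {E : Type*} [NormedAddCommGroup E] [NormedSpace ℝ E]
    [FiniteDimensional ℝ E] [MeasurableSpace E] [BorelSpace E] {μ : Measure E}
    [μ.IsAddHaarMeasure] {f g : E → E} {s t : Set E} {P : E → Prop}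
    (hs : MeasurableSet s) (ht : MeasurableSet t) (hf : DifferentiableOn ℝ f t)
    (hg : MapsTo g s t) (hfg : LeftInvOn f g s) (hP : ∀ᵐ y ∂μ.restrict t, P y) :
    ∀ᵐ x ∂μ.restrict s, P (g x) := by
  rw [ae_iff, Measure.restrict_apply' ht] at hP
  rw [ae_iff, Measure.restrict_apply' hs]
  refine measure_mono_null ?_ (addHaar_image_eq_zero_of_differentiableOn_of_addHaar_eq_zero μ
    (hf.mono inter_subset_right) hP)
  rintro x ⟨hx, hxs⟩
  exact ⟨g x, ⟨hx, hg hxs⟩, hfg hxs⟩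

theorem integral_mul_deriv_mul_comp_of_monotone {f σ : ℝ → ℝ} {c d : ℝ} (k : ℝ)
    (hmono : Monotone f) (hf : ContinuousOn f (uIcc c d))
    (hdiff : ∀ t ∈ Ioo (min c d) (max c d), DifferentiableAt ℝ f t) :
    ∫ t in c..d, k * deriv f t * σ (f t) = k * ∫ s in f c..f d, σ s := by
  simp_rw [mul_assoc, intervalIntegral.integral_const_mul,
    ← integral_comp_mul_deriv_of_deriv_nonneg hf (fun t ht => (hdiff t ht).hasDerivAt)
      (fun _ _ => hmono.deriv_nonneg), Function.comp_apply, mul_comm]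

section CuspMap

variable {a : ℝ}

theorem f0a_continuous (a : ℝ) : Continuous (f0a a) := by
  unfold f0a
  fun_prop

theorem f0a_monotone (ha : 0 < a) : Monotone (f0a a) := by
  intro s t hst
  unfold f0a
  gcongr

theorem f0a_differentiableAt (ha : 0 < a) {t : ℝ} (ht : t < 1 / 2) :
    DifferentiableAt ℝ (f0a a) t := by
  have harg : 1 - 8 * a * t / (a + 1) ^ 2 ≠ 0 := by
    rw [sub_ne_zero, ne_comm, ne_eq, div_eq_one_iff_eq (by positivity)]
    nlinarith [sq_nonneg (a - 1)]
  unfold f0a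
  fun_prop (disch := exact harg)

@[simp]
theorem f0a_zero : f0a a 0 = 0 := by
  simp [f0a]

theorem f0a_g0a (ha : 0 < a) (ha1 : a ≤ 1) {x : ℝ} (hx : x ∈ Icc (0:ℝ) 1) :
    f0a a (g0a a x) = x := by
  have hsq : 1 - 8 * a * g0a a x / (a + 1) ^ 2 = ((a + 1 - 2 * a * x) / (a + 1)) ^ 2 := by
    unfold g0a
    field_simp
    ring
  have hnonneg : 0 ≤ (a + 1 - 2 * a * x) / (a + 1) := by
    apply div_nonneg <;> nlinarith [hx.2]
  rw [f0a, hsq, Real.sqrt_sq hnonneg]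
  field_simp
  ring

theorem f0a_half (ha : 0 < a) (ha1 : a ≤ 1) : f0a a (1 / 2) = 1 := by
  have h := f0a_g0a ha ha1 (right_mem_Icc.2 zero_le_one)
  rwa [show g0a a 1 = 1 / 2 by unfold g0a; ring] at h

theorem g0a_mapsTo (ha : 0 < a) (ha1 : a ≤ 1) : MapsTo (g0a a) (Ico 0 1) (Ico 0 (1 / 2)) := by
  rintro x ⟨hx0, hx1⟩
  have : 0 < (1 - x) * (1 - a * x) := mul_pos (by linarith) (by nlinarith)
  constructor <;> unfold g0a <;> nlinarith

theorem deriv_g0a (a x : ℝ) : deriv (g0a a) x = (1 + a) / 2 - a * x := by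
  have h := ((hasDerivAt_id x).const_mul ((1 + a) / 2)).sub ((hasDerivAt_pow 2 x).const_mul (a / 2))
  exact h.deriv.trans (by norm_num; ring)

theorem f1a_continuous (a : ℝ) : Continuous (f1a a) := by
  unfold f1a
  have := f0a_continuous a
  fun_prop

theorem f1a_monotone (ha : 0 < a) : Monotone (f1a a) :=
  fun _ _ hst => sub_le_sub_left (f0a_monotone ha (sub_le_sub_left hst 1)) 1

theorem f1a_differentiableAt (ha : 0 < a) {t : ℝ} (ht : 1 / 2 < t) :
    DifferentiableAt ℝ (f1a a) t :=
  ((f0a_differentiableAt ha (by linarith)).comp t (by fun_prop)).const_sub 1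

theorem f1a_half (ha : 0 < a) (ha1 : a ≤ 1) : f1a a (1 / 2) = 0 := by
  rw [f1a, show (1:ℝ) - 1 / 2 = 1 / 2 by norm_num, f0a_half ha ha1, sub_self]

theorem deriv_g1a (a x : ℝ) : deriv (g1a a) x = (1 - a) / 2 + a * x := by
  have h := (((hasDerivAt_id x).const_mul ((1 - a) / 2)).const_add (1 / 2)).add
    ((hasDerivAt_pow 2 x).const_mul (a / 2))
  exact h.deriv.trans (by norm_num; ring)

end CuspMap

section CumulativeFunction

variable {a : ℝ}

theorem ae_comp_g0a (ha : 0 < a) (ha1 : a ≤ 1) {P : ℝ → Prop}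
    (hP : ∀ᵐ x ∂volume.restrict (Icc (0:ℝ) 1), P x) :
    ∀ᵐ x ∂volume.restrict (Icc (0:ℝ) 1), P (g0a a x) := by
  rw [← Measure.restrict_congr_set Ico_ae_eq_Icc]
  exact ae_restrict_comp_of_leftInvOn measurableSet_Ico measurableSet_Ico
    (fun t ht => (f0a_differentiableAt ha ht.2).differentiableWithinAt) (g0a_mapsTo ha ha1)
    (fun x hx => f0a_g0a ha ha1 (Ico_subset_Icc_self hx))
    (ae_restrict_of_ae_restrict_of_subset
      (Ico_subset_Icc_self.trans (Icc_subset_Icc_right (by norm_num))) hP)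

variable {ρ : ℝ × ℝ → ℝ} {x y : ℝ}

theorem integral_section_eq_of_lt_half (ha : 0 < a) (hy : y ∈ Icc (0:ℝ) (1 / 2))
    (hinv : ∀ᵐ t ∂volume.restrict (Icc (0:ℝ) 1), t < 1 / 2 →
      ρ (x, t) = deriv (g0a a) x * deriv (f0a a) t * ρ (g0a a x, f0a a t)) :
    ∫ t in 0..y, ρ (x, t) = ((1 + a) / 2 - a * x) * ∫ s in 0..f0a a y, ρ (g0a a x, s) := by
  calc ∫ t in 0..y, ρ (x, t)
      = ∫ t in 0..y, deriv (g0a a) x * deriv (f0a a) t * ρ (g0a a x, f0a a t) := by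
        refine integral_congr_ae ?_
        -- at `t = 1/2` only the right-branch relation is available
        filter_upwards [(ae_restrict_iff' measurableSet_Icc).1 hinv,
          Measure.ae_ne volume (1 / 2)] with t ht hthalf htmem
        rw [uIoc_of_le hy.1] at htmem
        exact ht ⟨htmem.1.le, htmem.2.trans (hy.2.trans (by norm_num))⟩
          ((htmem.2.trans hy.2).lt_of_ne hthalf)
    _ = _ := by
        rw [integral_mul_deriv_mul_comp_of_monotone (σ := fun s => ρ (g0a a x, s)) _
          (f0a_monotone ha) (f0a_continuous a).continuousOn
          (fun t ht => f0a_differentiableAt ha (ht.2.trans_le (max_le (by norm_num) hy.2))),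
          f0a_zero, deriv_g0a]

theorem integral_section_eq_of_half_le (ha : 0 < a) (ha1 : a ≤ 1)
    (hy : y ∈ Icc (1 / 2 : ℝ) 1)
    (hinv : ∀ᵐ t ∂volume.restrict (Icc (0:ℝ) 1), 1 / 2 ≤ t →
      ρ (x, t) = deriv (g1a a) x * deriv (f1a a) t * ρ (g1a a x, f1a a t)) :
    ∫ t in 1 / 2..y, ρ (x, t) = ((1 - a) / 2 + a * x) * ∫ s in 0..f1a a y, ρ (g1a a x, s) := by
  calc ∫ t in 1 / 2..y, ρ (x, t)
      = ∫ t in 1 / 2..y, deriv (g1a a) x * deriv (f1a a) t * ρ (g1a a x, f1a a t) := by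
        refine integral_congr_ae ?_
        filter_upwards [(ae_restrict_iff' measurableSet_Icc).1 hinv] with t ht htmem
        rw [uIoc_of_le hy.1] at htmem
        exact ht ⟨(by norm_num : (0:ℝ) ≤ 1 / 2).trans htmem.1.le, htmem.2.trans hy.2⟩
          htmem.1.le
    _ = _ := by
        rw [integral_mul_deriv_mul_comp_of_monotone (σ := fun s => ρ (g1a a x, s)) _
          (f1a_monotone ha) (f1a_continuous a).continuousOn
          (fun t ht => f1a_differentiableAt ha ((le_min le_rfl hy.1).trans_lt ht.1)),
          f1a_half ha ha1, deriv_g1a]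

end CumulativeFunction

theorem cusp_cumulative_functional_equation_general (a : ℝ) (ha : 0 < a) (ha1 : a ≤ 1)
    (ρ : ℝ × ℝ → ℝ)
    (hρint : IntegrableOn ρ (Icc 0 1 ×ˢ Icc 0 1))
    (hρnorm : ∀ᵐ x ∂(volume.restrict (Icc (0:ℝ) 1)), (∫ t in Icc (0:ℝ) 1, ρ (x, t)) = 1)
    (hρinv : ∀ᵐ p ∂(volume.restrict (Icc (0:ℝ) 1 ×ˢ Icc (0:ℝ) 1)),
      (p.2 < 1/2 →
        ρ p = deriv (g0a a) p.1 * deriv (f0a a) p.2 * ρ (g0a a p.1, f0a a p.2)) ∧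
      (1/2 ≤ p.2 →
        ρ p = deriv (g1a a) p.1 * deriv (f1a a) p.2 * ρ (g1a a p.1, f1a a p.2)))
    (r : ℝ → ℝ → ℝ)
    (hr : ∀ x y, r x y = ∫ t in (0:ℝ)..y, ρ (x, t)) :
    ∀ᵐ x ∂(volume.restrict (Icc (0:ℝ) 1)),
      (∀ y ∈ Icc (0:ℝ) (1/2),
        r x y = ((1 + a) / 2 - a * x) * r (g0a a x) (f0a a y)) ∧
      (∀ y ∈ Icc (1/2:ℝ) 1,
        r x y = (1 + a) / 2 - a * x + ((1 - a) / 2 + a * x) * r (g1a a x) (f1a a y)) := by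
  have hvol : volume.restrict (Icc (0:ℝ) 1 ×ˢ Icc (0:ℝ) 1)
      = (volume.restrict (Icc (0:ℝ) 1)).prod (volume.restrict (Icc (0:ℝ) 1)) := by
    rw [Measure.volume_eq_prod, Measure.prod_restrict]
  rw [IntegrableOn, hvol] at hρint
  rw [hvol] at hρinv
  filter_upwards [hρint.prod_right_ae, Measure.ae_ae_of_ae_prod hρinv,
    ae_comp_g0a ha ha1 hρnorm] with x hsection hinv hnorm
  have hleft : ∀ y ∈ Icc (0:ℝ) (1 / 2), r x y = ((1 + a) / 2 - a * x) * r (g0a a x) (f0a a y) :=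
    fun y hy => by rw [hr, hr, integral_section_eq_of_lt_half ha hy (hinv.mono fun _ h => h.1)]
  refine ⟨hleft, fun y hy => ?_⟩
  have hhalf : r x (1 / 2) = (1 + a) / 2 - a * x := by
    rw [hleft _ (right_mem_Icc.2 (by norm_num)), f0a_half ha ha1, hr, integral_of_le zero_le_one,
      ← integral_Icc_eq_integral_Ioc, hnorm, mul_one]
  have hmid : (1 / 2 : ℝ) ∈ Icc 0 1 := by norm_num
  have hint : ∀ c ∈ Icc (0:ℝ) 1, ∀ d ∈ Icc (0:ℝ) 1,
      IntervalIntegrable (fun t => ρ (x, t)) volume c d := fun c hc d hd =>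
    (IntegrableOn.mono_set hsection (uIcc_subset_Icc hc hd)).intervalIntegrable
  rw [hr, ← integral_add_adjacent_intervals (hint 0 (left_mem_Icc.2 zero_le_one) _ hmid)
    (hint _ hmid y ⟨hmid.1.trans hy.1, hy.2⟩), ← hr, hhalf,
    integral_section_eq_of_half_le ha ha1 hy (hinv.mono fun _ h => h.2), hr]

/-- If `ρ` is a nonnegative integrable invariant density of the
two-dimensional cusp map `F⁽ᵃ⁾` whose `y`-sections integrate to `1`, then the
partial cumulative function `r(x,y) = ∫₀^y ρ(x,t) dt` satisfies the cumulative
functional equation, for a.e. `x` and every `y`. -/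
theorem cusp_cumulative_functional_equation (a : ℝ) (ha : 0 < a) (ha1 : a ≤ 1)
    (ρ : ℝ × ℝ → ℝ)
    (hρpos : ∀ p ∈ Icc (0:ℝ) 1 ×ˢ Icc (0:ℝ) 1, 0 ≤ ρ p)
    (hρint : IntegrableOn ρ (Icc 0 1 ×ˢ Icc 0 1))
    (hρnorm : ∀ᵐ x ∂(volume.restrict (Icc (0:ℝ) 1)), (∫ t in Icc (0:ℝ) 1, ρ (x, t)) = 1)
    (hρinv : ∀ᵐ p ∂(volume.restrict (Icc (0:ℝ) 1 ×ˢ Icc (0:ℝ) 1)),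
      (p.2 < 1/2 →
        ρ p = deriv (g0a a) p.1 * deriv (f0a a) p.2 * ρ (g0a a p.1, f0a a p.2)) ∧
      (1/2 ≤ p.2 →
        ρ p = deriv (g1a a) p.1 * deriv (f1a a) p.2 * ρ (g1a a p.1, f1a a p.2)))
    (r : ℝ → ℝ → ℝ)
    (hr : ∀ x y, r x y = ∫ t in (0:ℝ)..y, ρ (x, t)) :
    ∀ᵐ x ∂(volume.restrict (Icc (0:ℝ) 1)),
      (∀ y ∈ Icc (0:ℝ) (1/2),
        r x y = ((1 + a) / 2 - a * x) * r (g0a a x) (f0a a y)) ∧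
      (∀ y ∈ Icc (1/2:ℝ) 1,
        r x y = (1 + a) / 2 - a * x + ((1 - a) / 2 + a * x) * r (g1a a x) (f1a a y)) :=
  cusp_cumulative_functional_equation_general a ha ha1 ρ hρint hρnorm hρinv r hr
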